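/- arXiv:2208.06645 — 2 statements merged into one kernel-verified Lean document; each statement's English description precedes it below -/
import Mathlib

section
/- Let X be a paracompact Hausdorff topological space and n ≥ 0. If X is LC^n, then every open cover 𝒰 of X admits an open cover 𝒱 of X that is an n-barycentric-star refinement of 𝒰. (This is Lemma 4.6 of the paper.) -/
open Set Metric Topology

noncomputable section

/-- The unit `k`-sphere, as a subset of `ℝ^{k+1}`. -/
abbrev unitSphere (k : ℕ) : Set (EuclideanSpace ℝ (Fin (k + 1))) := sphere 0 1

/-- The closed unit `(k+1)`-ball, as a subset of `ℝ^{k+1}`. -/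
abbrev unitBall (k : ℕ) : Set (EuclideanSpace ℝ (Fin (k + 1))) := closedBall 0 1

/-- `g : D^{k+1} → X` extends `f : S^k → X`. -/
def ExtendsTo {X : Type*} [TopologicalSpace X] {k : ℕ}
    (f : C(unitSphere k, X)) (g : C(unitBall k, X)) : Prop :=
  ∀ (y : EuclideanSpace ℝ (Fin (k + 1))) (hy : y ∈ unitSphere k),
    g ⟨y, sphere_subset_closedBall hy⟩ = f ⟨y, hy⟩

/-- `𝒰` is an open cover of `X`. -/
def IsOpenCover {X : Type*} [TopologicalSpace X] (𝒰 : Set (Set X)) : Prop :=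
  (∀ U ∈ 𝒰, IsOpen U) ∧ ⋃₀ 𝒰 = univ

/-- The star `St(x,𝒱)` of a point with respect to a cover. -/
def ptStar {X : Type*} (x : X) (𝒱 : Set (Set X)) : Set X :=
  ⋃₀ {V ∈ 𝒱 | x ∈ V}

/-- `𝒱` refines `𝒰`. -/
def Refines {X : Type*} (𝒱 𝒰 : Set (Set X)) : Prop :=
  ∀ V ∈ 𝒱, ∃ U ∈ 𝒰, V ⊆ U

/-- `𝒱` is an `n`-barycentric-star refinement of `𝒰`. -/
def NBStarRefines {X : Type*} [TopologicalSpace X] (n : ℕ) (𝒱 𝒰 : Set (Set X)) : Prop :=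
  Refines 𝒱 𝒰 ∧
    ∀ k ≤ n, ∀ x : X, ∀ f : C(unitSphere k, X), range f ⊆ ptStar x 𝒱 →
      ∃ U ∈ 𝒰, ptStar x 𝒱 ⊆ U ∧ ∃ g : C(unitBall k, X), range g ⊆ U ∧ ExtendsTo f g

/-- `X` is `LC^n`. -/
def IsLC (n : ℕ) (X : Type*) [TopologicalSpace X] : Prop :=
  ∀ x : X, ∀ U ∈ 𝓝 x, ∃ V ∈ 𝓝 x, V ⊆ U ∧
    ∀ k ≤ n, ∀ f : C(unitSphere k, X), range f ⊆ V →
      ∃ g : C(unitBall k, X), range g ⊆ U ∧ ExtendsTo f g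

/-- Lemma 4.6: a paracompact Hausdorff `LC^n` space admits `n`-barycentric-star
refinements of all open covers. -/
theorem lc_nbstar_refinement {X : Type*} [TopologicalSpace X] [ParacompactSpace X] [T2Space X]
    (n : ℕ) (hX : IsLC n X) (𝒰 : Set (Set X)) (h𝒰 : IsOpenCover 𝒰) :
    ∃ 𝒱 : Set (Set X), IsOpenCover 𝒱 ∧ NBStarRefines n 𝒱 𝒰 := by
  classical
  obtain ⟨hUo, hUc⟩ := h𝒰
  have hx𝒰 : ∀ x : X, ∃ U, U ∈ 𝒰 ∧ x ∈ U := by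
    intro x
    have : x ∈ ⋃₀ 𝒰 := hUc ▸ mem_univ x
    simpa [mem_sUnion] using this
  choose U hU𝒰 hxU using hx𝒰
  have hn : ∀ x, U x ∈ 𝓝 x := fun x => (hUo _ (hU𝒰 x)).mem_nhds (hxU x)
  choose V hVmem hVU hVext using fun x => hX x (U x) (hn x)
  set O : X → Set X := fun x => interior (V x) with hO
  have hOo : ∀ x, IsOpen (O x) := fun x => isOpen_interior
  have hxO : ∀ x, x ∈ O x := fun x => mem_interior_iff_mem_nhds.2 (hVmem x)
  have hOV : ∀ x, O x ⊆ V x := fun x => interior_subset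
  have hOcov : ⋃ x, O x = univ := eq_univ_of_forall fun x => mem_iUnion.2 ⟨x, hxO x⟩
  obtain ⟨v, hvo, hvcov, hvlf, hvO⟩ := precise_refinement O hOo hOcov
  obtain ⟨w, hwcov, hwo, hwcl⟩ :=
    exists_iUnion_eq_closure_subset hvo (fun x => hvlf.point_finite x) hvcov
  set C : X → Set X := fun i => closure (w i) with hC
  have hClf : LocallyFinite C := hvlf.subset hwcl
  have hCv : ∀ i, C i ⊆ v i := hwcl
  set I : X → Set X := fun x => {i | x ∈ C i} with hI
  have hIfin : ∀ x, (I x).Finite := fun x => hClf.point_finite x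
  have hInonempty : ∀ x, ∃ j, x ∈ w j := by
    intro x
    have : x ∈ ⋃ i, w i := hwcov ▸ mem_univ x
    exact mem_iUnion.1 this
  set B : X → Set X := fun x => ⋃ i ∈ (I x)ᶜ, C i with hB
  have hBclosed : ∀ x, IsClosed (B x) := by
    intro x
    have : B x = ⋃ i : ((I x)ᶜ : Set X), C i := by
      simp [hB, iUnion_subtype]
    rw [this]
    exact (hClf.comp_injective Subtype.val_injective).isClosed_iUnion
      fun i => isClosed_closure
  set W : X → Set X := fun x => (⋂ i ∈ I x, v i) \ B x with hW
  have hWo : ∀ x, IsOpen (W x) :=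
    fun x => ((hIfin x).isOpen_biInter fun i _ => hvo i).sdiff (hBclosed x)
  have hxW : ∀ x, x ∈ W x := by
    intro x
    refine ⟨mem_iInter₂.2 fun i hi => hCv i hi, ?_⟩
    intro hxB
    obtain ⟨i, hi, hxC⟩ := mem_iUnion₂.1 hxB
    exact hi hxC
  -- key: for each x there is j with ptStar x (range W) ⊆ v j
  have hstar : ∀ x : X, ∃ j, ptStar x (range W) ⊆ v j := by
    intro x
    obtain ⟨j, hj⟩ := hInonempty x
    have hxCj : x ∈ C j := subset_closure hj
    refine ⟨j, ?_⟩
    rintro y ⟨A, ⟨⟨z, rfl⟩, hxA⟩, hyA⟩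
    have hjI : j ∈ I z := by
      by_contra hjI
      exact hxA.2 (mem_iUnion₂.2 ⟨j, hjI, hxCj⟩)
    exact (biInter_subset_of_mem hjI) hyA.1
  have hWsub : ∀ z : X, ∃ j, W z ⊆ v j := by
    intro z
    obtain ⟨j, hj⟩ := hInonempty z
    have hjI : j ∈ I z := subset_closure hj
    exact ⟨j, fun y hy => (biInter_subset_of_mem hjI) hy.1⟩
  refine ⟨range W, ⟨?_, ?_⟩, ?_, ?_⟩
  · rintro _ ⟨z, rfl⟩; exact hWo z
  · apply eq_univ_of_forall
    intro x
    exact ⟨W x, ⟨x, rfl⟩, hxW x⟩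
  · rintro _ ⟨z, rfl⟩
    obtain ⟨j, hj⟩ := hWsub z
    exact ⟨U j, hU𝒰 j, hj.trans ((hvO j).trans ((hOV j).trans (hVU j)))⟩
  · intro k hk x f hf
    obtain ⟨j, hj⟩ := hstar x
    have hsub : ptStar x (range W) ⊆ U j := hj.trans ((hvO j).trans ((hOV j).trans (hVU j)))
    have hfV : range f ⊆ V j := hf.trans (hj.trans ((hvO j).trans (hOV j)))
    obtain ⟨g, hg, hgext⟩ := hVext j k hk f hfV
    exact ⟨U j, hU𝒰 j, hsub, g, hg, hgext⟩
end
end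

section
/- Let n ≥ 1 and let f : (X,x_0) → (Y,y_0) be a based homotopy equivalence, i.e., there is a based map g : (Y,y_0) → (X,x_0) with g ∘ f based-homotopic to the identity of X and f ∘ g based-homotopic to the identity of Y. Then the induced isomorphism f_# : π_n(X,x_0) → π_n(Y,y_0) maps π_n^{Sp}(X,x_0) bijectively onto π_n^{Sp}(Y,y_0); in particular the restriction of f_# is a group isomorphism π_n^{Sp}(X,x_0) ≅ π_n^{Sp}(Y,y_0). -/
open Set Topology unitInterval ContinuousMap

noncomputable section

variable {X : Type*} [TopologicalSpace X]

/-- A continuous map `I^N → X` which, when regarded as a map on the `N`-sphere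
(i.e. a cube map constant on the boundary), is freely homotopic---through maps
constant on the boundary---to a map whose image is contained in some member of `𝒰`. -/
def FreelySmall {N : Type*} (𝒰 : Set (Set X)) (p : C((N → I), X)) : Prop :=
  ∃ (q : C((N → I), X)) (U : Set X) (H : ContinuousMap.Homotopy p q),
    U ∈ 𝒰 ∧ range q ⊆ U ∧
      ∀ t : I, ∀ y ∈ Cube.boundary N, ∀ z ∈ Cube.boundary N, H (t, y) = H (t, z)

/-- The `(n+1)`-st Spanier group of `(X,x₀)` with respect to the cover `𝒰`:
the subgroup of `π_{n+1}(X,x₀)` generated by classes of based maps which are freely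
homotopic (as sphere maps) into some member of `𝒰`. -/
def spanierGroup (n : ℕ) (𝒰 : Set (Set X)) (x₀ : X) : Subgroup (π_ (n + 1) X x₀) :=
  Subgroup.closure {γ | ∃ f : GenLoop (Fin (n + 1)) X x₀, FreelySmall 𝒰 f.1 ∧ γ = ⟦f⟧}

/-- The absolute `(n+1)`-st Spanier group of `(X,x₀)`: the intersection of the
Spanier groups over all open covers of `X`. -/
def spanierGroupAbs (n : ℕ) (x₀ : X) : Subgroup (π_ (n + 1) X x₀) :=
  ⨅ (𝒰 : Set (Set X)) (_ : IsOpenCover 𝒰), spanierGroup n 𝒰 x₀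

/-- The map `π_{n+1}(X,x₀) → π_{n+1}(Y,y₀)` induced by a based map `f : (X,x₀) → (Y,y₀)`. -/
def inducedMap (n : ℕ) {Y : Type*} [TopologicalSpace Y] (f : C(X, Y)) {x₀ : X} {y₀ : Y}
    (hf : f x₀ = y₀) : π_ (n + 1) X x₀ → π_ (n + 1) Y y₀ :=
  Quotient.map
    (fun g => ⟨f.comp g.1, fun y hy => by
      simp only [ContinuousMap.comp_apply, g.2 y hy, hf]⟩)
    (fun g₁ g₂ h => Nonempty.map (fun H => H.compContinuousMap f) h)

/-!
Pulling an open cover of `Y` back along `f` gives an open cover of `X`, and `f` carries a map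
that is freely small for the pulled-back cover to one that is freely small for the original
cover. Hence `f_#` maps `π^{Sp}(X)` into `π^{Sp}(Y)` for every based map `f`. Functoriality and
homotopy invariance of `f_#` make `g_#` a two-sided inverse of `f_#`, and `g_#` maps
`π^{Sp}(Y)` back into `π^{Sp}(X)`.
-/

section

variable {Y Z : Type*} [TopologicalSpace Y] [TopologicalSpace Z]

def GenLoop.map {N : Type*} (f : C(X, Y)) {x₀ : X} {y₀ : Y} (hf : f x₀ = y₀)
    (p : GenLoop N X x₀) : GenLoop N Y y₀ :=
  ⟨f.comp p.1, fun y hy => by simp only [ContinuousMap.comp_apply, p.2 y hy, hf]⟩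

theorem GenLoop.map_transAt {N : Type*} [DecidableEq N] (f : C(X, Y)) {x₀ : X} {y₀ : Y}
    (hf : f x₀ = y₀) (i : N) (p q : GenLoop N X x₀) :
    GenLoop.map f hf (GenLoop.transAt i p q) =
      GenLoop.transAt i (GenLoop.map f hf p) (GenLoop.map f hf q) := by
  ext t
  show f (GenLoop.transAt i p q t) = _
  simp only [GenLoop.transAt, GenLoop.coe_copy, apply_ite f]
  rfl

variable (n : ℕ)

theorem inducedMap_mk (f : C(X, Y)) {x₀ : X} {y₀ : Y} (hf : f x₀ = y₀)
    (p : GenLoop (Fin (n + 1)) X x₀) :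
    inducedMap n f hf ⟦p⟧ = ⟦GenLoop.map f hf p⟧ :=
  rfl

theorem inducedMap_mul (f : C(X, Y)) {x₀ : X} {y₀ : Y} (hf : f x₀ = y₀)
    (a b : π_ (n + 1) X x₀) :
    inducedMap n f hf (a * b) = inducedMap n f hf a * inducedMap n f hf b := by
  induction a using Quotient.ind with | _ p => ?_
  induction b using Quotient.ind with | _ q => ?_
  have h₁ := HomotopyGroup.mul_spec (i := 0) (p := p) (q := q)
  have h₂ := HomotopyGroup.mul_spec (i := 0) (p := GenLoop.map f hf p) (q := GenLoop.map f hf q)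
  beta_reduce at h₁ h₂
  rw [inducedMap_mk, inducedMap_mk, h₁, h₂, inducedMap_mk, GenLoop.map_transAt]

def inducedHom (f : C(X, Y)) {x₀ : X} {y₀ : Y} (hf : f x₀ = y₀) :
    π_ (n + 1) X x₀ →* π_ (n + 1) Y y₀ :=
  MonoidHom.mk' (inducedMap n f hf) (inducedMap_mul n f hf)

theorem inducedMap_id (x₀ : X) (a : π_ (n + 1) X x₀) :
    inducedMap n (ContinuousMap.id X) rfl a = a := by
  induction a using Quotient.ind
  rfl

theorem inducedMap_comp (f : C(X, Y)) (g : C(Y, Z)) {x₀ : X} {y₀ : Y} {z₀ : Z}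
    (hf : f x₀ = y₀) (hg : g y₀ = z₀) (a : π_ (n + 1) X x₀) :
    inducedMap n g hg (inducedMap n f hf a) =
      inducedMap n (g.comp f) (by rw [comp_apply, hf, hg]) a := by
  induction a using Quotient.ind
  rfl

theorem ContinuousMap.HomotopicRel.inducedMap_eq {f₁ f₂ : C(X, Y)} {x₀ : X} {y₀ : Y}
    (H : f₁.HomotopicRel f₂ {x₀}) (h₁ : f₁ x₀ = y₀) (h₂ : f₂ x₀ = y₀) :
    inducedMap n f₁ h₁ = inducedMap n f₂ h₂ := by
  obtain ⟨F⟩ := H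
  funext a
  induction a using Quotient.ind with | _ p => ?_
  refine Quotient.sound ⟨{ toHomotopy := F.toHomotopy.comp (ContinuousMap.Homotopy.refl p.1), prop' := ?_ }⟩
  intro t y hy
  show F (t, p.1 y) = f₁ (p.1 y)
  rw [p.2 y hy]
  exact F.eq_fst t rfl

theorem inducedMap_leftInverse (f : C(X, Y)) (g : C(Y, X)) {x₀ : X} {y₀ : Y}
    (hf : f x₀ = y₀) (hg : g y₀ = x₀) (hgf : (g.comp f).HomotopicRel (ContinuousMap.id X) {x₀}) :
    Function.LeftInverse (inducedMap n g hg) (inducedMap n f hf) := fun a => by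
  rw [inducedMap_comp, hgf.inducedMap_eq n (y₀ := x₀) _ rfl]
  exact inducedMap_id n x₀ a

theorem IsOpenCover.preimage (f : C(X, Y)) {𝒰 : Set (Set Y)} (h𝒰 : IsOpenCover 𝒰) :
    IsOpenCover ((f ⁻¹' ·) '' 𝒰) := by
  refine ⟨?_, ?_⟩
  · rintro _ ⟨U, hU, rfl⟩
    exact (h𝒰.1 U hU).preimage f.continuous
  · rw [sUnion_image, ← preimage_iUnion₂, ← sUnion_eq_biUnion, h𝒰.2, preimage_univ]

theorem FreelySmall.comp {N : Type*} (f : C(X, Y)) {𝒰 : Set (Set Y)} {p : C(N → I, X)}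
    (hp : FreelySmall ((f ⁻¹' ·) '' 𝒰) p) : FreelySmall 𝒰 (f.comp p) := by
  obtain ⟨q, _, H, ⟨U, hU, rfl⟩, hq, hH⟩ := hp
  refine ⟨f.comp q, U, (ContinuousMap.Homotopy.refl f).comp H, hU, ?_, fun t y hy z hz => ?_⟩
  · rw [coe_comp, range_comp]
    exact image_subset_iff.2 hq
  · simp only [ContinuousMap.Homotopy.comp_apply, ContinuousMap.Homotopy.refl_apply, hH t y hy z hz]

theorem spanierGroup_preimage_map_le (f : C(X, Y)) {x₀ : X} {y₀ : Y} (hf : f x₀ = y₀)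
    (𝒰 : Set (Set Y)) :
    (spanierGroup n ((f ⁻¹' ·) '' 𝒰) x₀).map (inducedHom n f hf) ≤ spanierGroup n 𝒰 y₀ := by
  rw [spanierGroup, MonoidHom.map_closure]
  refine Subgroup.closure_mono ?_
  rintro _ ⟨_, ⟨p, hp, rfl⟩, rfl⟩
  exact ⟨GenLoop.map f hf p, hp.comp f, rfl⟩

theorem inducedMap_mapsTo_spanierGroupAbs (f : C(X, Y)) {x₀ : X} {y₀ : Y} (hf : f x₀ = y₀) :
    MapsTo (inducedMap n f hf) (spanierGroupAbs n x₀) (spanierGroupAbs n y₀) := by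
  intro a ha
  simp only [SetLike.mem_coe, spanierGroupAbs, Subgroup.mem_iInf] at ha ⊢
  intro 𝒰 h𝒰
  exact spanierGroup_preimage_map_le n f hf 𝒰 ⟨a, ha _ (h𝒰.preimage f), rfl⟩

end

/-- If `f` is a based homotopy equivalence, then the induced isomorphism on `π_{n+1}`
restricts to a group isomorphism between the absolute Spanier groups: it is
multiplicative and maps `π_{n+1}^{Sp}(X,x₀)` bijectively onto `π_{n+1}^{Sp}(Y,y₀)`. -/
theorem inducedMap_spanierGroupAbs_bijOn (n : ℕ) {Y : Type*} [TopologicalSpace Y]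
    (f : C(X, Y)) (x₀ : X) (y₀ : Y) (hf : f x₀ = y₀)
    (g : C(Y, X)) (hg : g y₀ = x₀)
    (hgf : (g.comp f).HomotopicRel (ContinuousMap.id X) {x₀})
    (hfg : (f.comp g).HomotopicRel (ContinuousMap.id Y) {y₀}) :
    (∀ a b : π_ (n + 1) X x₀,
        inducedMap n f hf (a * b) = inducedMap n f hf a * inducedMap n f hf b) ∧
    Set.BijOn (inducedMap n f hf)
      (spanierGroupAbs n x₀ : Set (π_ (n + 1) X x₀))
      (spanierGroupAbs n y₀ : Set (π_ (n + 1) Y y₀)) := by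
  have hinv : InvOn (inducedMap n g hg) (inducedMap n f hf) (spanierGroupAbs n x₀)
      (spanierGroupAbs n y₀) :=
    ⟨fun a _ => inducedMap_leftInverse n f g hf hg hgf a,
      fun b _ => inducedMap_leftInverse n g f hg hf hfg b⟩
  exact ⟨inducedMap_mul n f hf, hinv.bijOn (inducedMap_mapsTo_spanierGroupAbs n f hf)
    (inducedMap_mapsTo_spanierGroupAbs n g hg)⟩
end
end
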